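/- Let 1 < α ≤ 1.1 and let z = x + iy lie in the domain D_𝒢 = {z ∈ ℍ : |z| > 1, 0 < Re z < 1/2}. Define A_{n,m}(α; y) := n³ m (α² e^{−πy(αn² + m²/α)} − e^{−πy(αm² + n²/α)}) for positive integers n, m. Then Σ_{n=1}^∞ Σ_{m=1}^∞ A_{n,m}(α; y)·sin(2mnπx) > 0. -/

import Mathlib

open Real Complex

/-- `A_{n,m}(α; y) = n³ m (α² e^{−πy(αn² + m²/α)} − e^{−πy(αm² + n²/α)})`. -/
noncomputable def latticeA (α y : ℝ) (n m : ℕ) : ℝ :=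
  (n : ℝ) ^ 3 * (m : ℝ) *
    (α ^ 2 * Real.exp (-π * y * (α * (n : ℝ) ^ 2 + (m : ℝ) ^ 2 / α)) -
      Real.exp (-π * y * (α * (m : ℝ) ^ 2 + (n : ℝ) ^ 2 / α)))

/-!
The `(1, 1)` term dominates. Put `c = π y`; on `D_𝒢` we have `y > √3/2`, hence `c ≥ 27/10`,
and `sin 2πx > 0`. As `α + 1/α ≤ 2.01`, the `(1, 1)` term is at least
`2 (α - 1) e^{-2.01 c} sin 2πx`.

For every other pair `S = n² + m² ≥ 5`. Splitting
`A_{n,m} / (n³ m) = (α² - 1) e^{-u} + (e^{-u} - e^{-v})`, where `u, v ≥ 10 c S / 11` and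
`|u - v| ≤ 2.1 (α - 1) c S`, bounds it by `2.1 (α - 1) (1 + c S) e^{-10 c S / 11}`; with
`|sin 2mnπx| ≤ m n sin 2πx` the term is at most
`5000 (α - 1) e^{-2.01 c} sin 2πx · n⁴ 9^{-n²} · m² 9^{-m²}`.
Bounding each of the two theta-type series by two explicit terms plus a geometric tail shows that
the majorants of all pairs `≠ (1, 1)` add up to less than `1/2500` of the prefactor, which is the
lower bound for the `(1, 1)` term.
-/

theorem Real.abs_sin_nat_mul_le (n : ℕ) (θ : ℝ) :
    |Real.sin (n * θ)| ≤ n * |Real.sin θ| := by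
  induction n with
  | zero => simp
  | succ k ih =>
    rw [Nat.cast_succ, add_one_mul, Real.sin_add]
    calc |Real.sin (k * θ) * Real.cos θ + Real.cos (k * θ) * Real.sin θ|
        ≤ |Real.sin (k * θ)| * |Real.cos θ| + |Real.cos (k * θ)| * |Real.sin θ| := by
          rw [← abs_mul, ← abs_mul]
          exact abs_add_le _ _
      _ ≤ |Real.sin (k * θ)| * 1 + 1 * |Real.sin θ| := by
          gcongr <;> exact Real.abs_cos_le_one _
      _ ≤ (k + 1) * |Real.sin θ| := by linarith

theorem Real.abs_exp_neg_sub_exp_neg_le {u v L : ℝ} (hu : L ≤ u) (hv : L ≤ v) :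
    |Real.exp (-u) - Real.exp (-v)| ≤ |u - v| * Real.exp (-L) := by
  wlog huv : u ≤ v generalizing u v
  · rw [abs_sub_comm, abs_sub_comm u]
    exact this hv hu (le_of_not_ge huv)
  have hdiff : Real.exp (-u) - Real.exp (-v) ≤ (v - u) * Real.exp (-u) := by
    have h := mul_le_mul_of_nonneg_left (Real.one_sub_le_exp_neg (v - u)) (Real.exp_pos (-u)).le
    rw [← Real.exp_add] at h
    ring_nf at h ⊢
    linarith
  rw [abs_of_nonneg (sub_nonneg.2 (Real.exp_le_exp.2 (neg_le_neg huv))), abs_sub_comm,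
    abs_of_nonneg (sub_nonneg.2 huv)]
  exact hdiff.trans (by gcongr)

theorem Real.one_add_le_exp_mul_div {t : ℝ} (ht : 0 < t) (A : ℝ) :
    1 + A ≤ Real.exp (t * (1 + A) - 1) / t := by
  rw [le_div_iff₀ ht]
  linarith [Real.add_one_le_exp (t * (1 + A) - 1)]

theorem Real.exp_five_le : Real.exp 5 ≤ 170 := by
  have h : Real.exp 5 = Real.exp 1 ^ 5 := by rw [← Real.exp_nat_mul]; norm_num
  rw [h]
  calc Real.exp 1 ^ 5 ≤ 2.7182818286 ^ 5 := by gcongr; exact Real.exp_one_lt_d9.le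
    _ ≤ 170 := by norm_num

theorem Real.exp_neg_nine_div_four_le : Real.exp (-(9 / 4)) ≤ 1 / 9 := by
  have h : Real.exp (9 / 4) = Real.exp 1 ^ 2 * Real.exp (1 / 4) := by
    rw [← Real.exp_nat_mul, ← Real.exp_add]; norm_num
  have hlow : 9 ≤ Real.exp (9 / 4) := by
    rw [h]
    calc (9 : ℝ) ≤ 2.7182818283 ^ 2 * (1 / 4 + 1) := by norm_num
      _ ≤ Real.exp 1 ^ 2 * Real.exp (1 / 4) := by
        gcongr
        · exact Real.exp_one_gt_d9.le
        · exact Real.add_one_le_exp _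
  rw [Real.exp_neg, inv_le_comm₀ (Real.exp_pos _) (by norm_num)]
  simpa using hlow

theorem tsum_pos_of_abs_le_of_ne {ι : Type*} {f g : ι → ℝ} {i : ι} (hg : Summable g)
    (hfg : ∀ j ≠ i, |f j| ≤ g j) (hlt : ∑' j, g j < f i + g i) :
    Summable f ∧ 0 < ∑' j, f j := by
  have hf : Summable f :=
    hg.of_norm_bounded_eventually ((Filter.eventually_cofinite_ne i).mono hfg)
  refine ⟨hf, ?_⟩
  have hsum : f i + g i ≤ ∑' j, (f j + g j) :=
    (hf.add hg).le_tsum i fun j hj => by linarith [neg_abs_le (f j), hfg j hj]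
  linarith [hf.tsum_add hg]

noncomputable def thetaTerm (q : ℝ) (j n : ℕ) : ℝ := (n : ℝ) ^ j * q ^ (n ^ 2)

section ThetaTerm

variable {q : ℝ}

theorem thetaTerm_nonneg (hq : 0 ≤ q) (j n : ℕ) : 0 ≤ thetaTerm q j n := by
  unfold thetaTerm; positivity

theorem summable_thetaTerm (hq0 : 0 ≤ q) (hq1 : q < 1) (j : ℕ) : Summable (thetaTerm q j) := by
  have hgeom := summable_pow_mul_geometric_of_norm_lt_one j (r := q) (by rwa [norm_of_nonneg hq0])
  refine hgeom.of_nonneg_of_le (thetaTerm_nonneg hq0 j) fun n => ?_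
  exact mul_le_mul_of_nonneg_left
    (pow_le_pow_of_le_one hq0 hq1.le (Nat.le_self_pow two_ne_zero n)) (by positivity)

theorem summable_pnat_thetaTerm (hq0 : 0 ≤ q) (hq1 : q < 1) (j : ℕ) :
    Summable fun n : ℕ+ => thetaTerm q j n :=
  summable_pnat_iff_summable_nat.2 (summable_thetaTerm hq0 hq1 j)

theorem thetaTerm_add_three_le (hq0 : 0 ≤ q) (hq1 : q ≤ 1) (j k : ℕ) :
    thetaTerm q j (k + 3) ≤ 3 ^ j * q ^ 9 * ((4 / 3) ^ j * q ^ 6) ^ k := by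
  have hbase : (k : ℝ) + 3 ≤ 3 * (4 / 3) ^ k := by
    have := one_add_mul_le_pow (a := (1 / 3 : ℝ)) (by norm_num) k
    norm_num at this
    linarith
  have hexp : 9 + 6 * k ≤ (k + 3) ^ 2 := by nlinarith
  calc thetaTerm q j (k + 3) ≤ (3 * (4 / 3) ^ k) ^ j * q ^ (9 + 6 * k) := by
        unfold thetaTerm
        push_cast
        exact mul_le_mul (pow_le_pow_left₀ (by positivity) hbase j)
          (pow_le_pow_of_le_one hq0 hq1 hexp) (by positivity) (by positivity)
    _ = 3 ^ j * q ^ 9 * ((4 / 3) ^ j * q ^ 6) ^ k := by ring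

theorem tsum_thetaTerm_le (hq0 : 0 ≤ q) (hq1 : q < 1) {j : ℕ} (hj : j ≠ 0)
    (hρ : (4 / 3) ^ j * q ^ 6 < 1) :
    ∑' n, thetaTerm q j n ≤ q + 2 ^ j * q ^ 4 + 3 ^ j * q ^ 9 / (1 - (4 / 3) ^ j * q ^ 6) := by
  have hρ0 : 0 ≤ (4 / 3 : ℝ) ^ j * q ^ 6 := by positivity
  have htail : ∑' k, thetaTerm q j (k + 3) ≤ 3 ^ j * q ^ 9 / (1 - (4 / 3) ^ j * q ^ 6) := by
    rw [div_eq_mul_inv, ← tsum_geometric_of_lt_one hρ0 hρ, ← tsum_mul_left]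
    exact Summable.tsum_le_tsum (thetaTerm_add_three_le hq0 hq1.le j)
      ((summable_nat_add_iff 3).2 (summable_thetaTerm hq0 hq1 j))
      ((summable_geometric_of_lt_one hρ0 hρ).mul_left _)
  rw [← (summable_thetaTerm hq0 hq1 j).sum_add_tsum_nat_add 3]
  have hhead : ∑ n ∈ Finset.range 3, thetaTerm q j n = q + 2 ^ j * q ^ 4 := by
    simp [Finset.sum_range_succ, thetaTerm, hj]
  linarith

end ThetaTerm

noncomputable def latticeMajorant (p : ℕ+ × ℕ+) : ℝ :=
  thetaTerm (1 / 9) 4 p.1 * thetaTerm (1 / 9) 2 p.2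

theorem summable_latticeMajorant : Summable latticeMajorant := by
  have hq0 : (0 : ℝ) ≤ 1 / 9 := by norm_num
  have hq1 : (1 / 9 : ℝ) < 1 := by norm_num
  exact (summable_pnat_thetaTerm hq0 hq1 4).mul_of_nonneg (summable_pnat_thetaTerm hq0 hq1 2)
    (fun _ => thetaTerm_nonneg hq0 _ _) (fun _ => thetaTerm_nonneg hq0 _ _)

theorem tsum_latticeMajorant_lt :
    ∑' p, latticeMajorant p < 1 / 2500 + latticeMajorant (1, 1) := by
  have hq0 : (0 : ℝ) ≤ 1 / 9 := by norm_num
  have hq1 : (1 / 9 : ℝ) < 1 := by norm_num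
  unfold latticeMajorant
  rw [← (summable_pnat_thetaTerm hq0 hq1 4).tsum_mul_tsum (summable_pnat_thetaTerm hq0 hq1 2)
      summable_latticeMajorant,
    tsum_pnat_eq_tsum_of_eq_zero (by simp [thetaTerm]),
    tsum_pnat_eq_tsum_of_eq_zero (by simp [thetaTerm])]
  calc (∑' n, thetaTerm (1 / 9) 4 n) * ∑' m, thetaTerm (1 / 9) 2 m
      ≤ (1 / 9 + 2 ^ 4 * (1 / 9) ^ 4 + 3 ^ 4 * (1 / 9) ^ 9 / (1 - (4 / 3) ^ 4 * (1 / 9) ^ 6)) *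
          (1 / 9 + 2 ^ 2 * (1 / 9) ^ 4 + 3 ^ 2 * (1 / 9) ^ 9 / (1 - (4 / 3) ^ 2 * (1 / 9) ^ 6)) :=
        mul_le_mul (tsum_thetaTerm_le hq0 hq1 (by norm_num) (by norm_num))
          (tsum_thetaTerm_le hq0 hq1 (by norm_num) (by norm_num))
          (tsum_nonneg (thetaTerm_nonneg hq0 2)) (by norm_num)
    _ < 1 / 2500 + thetaTerm (1 / 9) 4 (1 : ℕ+) * thetaTerm (1 / 9) 2 (1 : ℕ+) := by
        norm_num [thetaTerm]

theorem abs_sq_mul_exp_sub_exp_le {α c N M : ℝ} (hα0 : 1 ≤ α) (hα1 : α ≤ 11 / 10)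
    (hc : 0 ≤ c) (hN : 0 ≤ N) (hM : 0 ≤ M) :
    |α ^ 2 * Real.exp (-(c * (α * N + M / α))) - Real.exp (-(c * (α * M + N / α)))| ≤
      (α - 1) * (21 / 10 * (1 + c * (N + M)) * Real.exp (-(10 / 11 * (c * (N + M))))) := by
  have hα : 0 < α := by linarith
  have hlower : ∀ P Q : ℝ, 0 ≤ P → 0 ≤ Q →
      10 / 11 * (c * (P + Q)) ≤ c * (α * P + Q / α) := by
    intro P Q hP hQ
    have hQ' : 10 / 11 * Q ≤ Q / α := by rw [le_div_iff₀ hα]; nlinarith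
    have hP' : 10 / 11 * P ≤ α * P := by nlinarith
    nlinarith [mul_le_mul_of_nonneg_left (add_le_add hP' hQ') hc]
  set u := c * (α * N + M / α)
  set v := c * (α * M + N / α)
  set L := 10 / 11 * (c * (N + M))
  have hu : L ≤ u := hlower N M hN hM
  have hv : L ≤ v := (hlower M N hM hN).trans_eq' (by ring)
  have hsq : α ^ 2 - 1 ≤ 21 / 10 * (α - 1) := by nlinarith
  have hsq0 : 0 ≤ α ^ 2 - 1 := by nlinarith
  have huv : |u - v| ≤ 21 / 10 * (α - 1) * (c * (N + M)) := by
    have hdiff : α - 1 / α = (α ^ 2 - 1) / α := by field_simp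
    have hdiff0 : 0 ≤ α - 1 / α := hdiff ▸ div_nonneg hsq0 hα.le
    have hdiff1 : α - 1 / α ≤ 21 / 10 * (α - 1) := hdiff ▸ (div_le_self hsq0 hα0).trans hsq
    have : u - v = c * (α - 1 / α) * (N - M) := by simp only [u, v]; field_simp; ring
    rw [this, abs_mul, abs_of_nonneg (mul_nonneg hc hdiff0)]
    calc c * (α - 1 / α) * |N - M| ≤ c * (21 / 10 * (α - 1)) * (N + M) := by
          gcongr
          exact abs_le.2 ⟨by linarith, by linarith⟩
      _ = 21 / 10 * (α - 1) * (c * (N + M)) := by ring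
  calc |α ^ 2 * Real.exp (-u) - Real.exp (-v)|
      = |(α ^ 2 - 1) * Real.exp (-u) + (Real.exp (-u) - Real.exp (-v))| := by ring_nf
    _ ≤ (α ^ 2 - 1) * Real.exp (-L) + |u - v| * Real.exp (-L) := by
        refine (abs_add_le _ _).trans (add_le_add ?_ (abs_exp_neg_sub_exp_neg_le hu hv))
        rw [abs_mul, abs_of_nonneg (by nlinarith), abs_of_pos (Real.exp_pos _)]
        gcongr
    _ ≤ 21 / 10 * (α - 1) * Real.exp (-L) +
          21 / 10 * (α - 1) * (c * (N + M)) * Real.exp (-L) := by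
        gcongr
    _ = (α - 1) * (21 / 10 * (1 + c * (N + M)) * Real.exp (-L)) := by ring

theorem one_add_mul_mul_exp_le {c : ℝ} (hc : 27 / 10 ≤ c) {S : ℕ} (hS : 5 ≤ S) :
    21 / 10 * (1 + c * S) * Real.exp (-(10 / 11 * (c * S))) ≤
      5000 * (1 / 9) ^ S * Real.exp (-(201 / 100 * c)) := by
  have hS' : (5 : ℝ) ≤ S := by exact_mod_cast hS
  have hpoly := one_add_le_exp_mul_div (t := 1 / 14) (by norm_num) (c * S)
  have hexponent : 1 / 14 * (1 + c * S) - 1 + -(10 / 11 * (c * S)) ≤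
      5 + S * -(9 / 4) + -(201 / 100 * c) := by
    nlinarith [mul_nonneg (sub_nonneg.2 hc) (by linarith : (0 : ℝ) ≤ 129 / 154 * S - 201 / 100)]
  calc 21 / 10 * (1 + c * S) * Real.exp (-(10 / 11 * (c * S)))
      ≤ 21 / 10 * (Real.exp (1 / 14 * (1 + c * S) - 1) / (1 / 14)) *
          Real.exp (-(10 / 11 * (c * S))) := by
        gcongr
    _ = 147 / 5 * Real.exp (1 / 14 * (1 + c * S) - 1 + -(10 / 11 * (c * S))) := by
        rw [Real.exp_add]; ring
    _ ≤ 147 / 5 * Real.exp (5 + S * -(9 / 4) + -(201 / 100 * c)) := by gcongr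
    _ = 147 / 5 * Real.exp 5 * Real.exp (-(9 / 4)) ^ S * Real.exp (-(201 / 100 * c)) := by
        rw [Real.exp_add, Real.exp_add, Real.exp_nat_mul]; ring
    _ ≤ 147 / 5 * 170 * (1 / 9) ^ S * Real.exp (-(201 / 100 * c)) := by
        gcongr
        · exact exp_five_le
        · exact exp_neg_nine_div_four_le
    _ ≤ 5000 * (1 / 9) ^ S * Real.exp (-(201 / 100 * c)) := by gcongr; norm_num

theorem abs_latticeA_le {α y : ℝ} (hα0 : 1 ≤ α) (hα1 : α ≤ 11 / 10) (hy : 0 ≤ y)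
    (n m : ℕ) :
    |latticeA α y n m| ≤ (α - 1) * (n ^ 3 * m) *
      (21 / 10 * (1 + π * y * (n ^ 2 + m ^ 2 : ℕ)) *
        Real.exp (-(10 / 11 * (π * y * (n ^ 2 + m ^ 2 : ℕ))))) := by
  have hcore := abs_sq_mul_exp_sub_exp_le hα0 hα1 (mul_nonneg pi_pos.le hy)
    (sq_nonneg (n : ℝ)) (sq_nonneg (m : ℝ))
  rw [latticeA, abs_mul, abs_of_nonneg (by positivity)]
  push_cast
  calc _ ≤ (n : ℝ) ^ 3 * m * ((α - 1) * (21 / 10 * (1 + π * y * (n ^ 2 + m ^ 2)) *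
        Real.exp (-(10 / 11 * (π * y * (n ^ 2 + m ^ 2)))))) := by
        gcongr
        simpa only [neg_mul] using hcore
    _ = _ := by ring

theorem abs_latticeA_mul_sin_le {α y : ℝ} (x : ℝ) (hα0 : 1 ≤ α) (hα1 : α ≤ 11 / 10)
    (hc : 27 / 10 ≤ π * y) {n m : ℕ} (hnm : 5 ≤ n ^ 2 + m ^ 2) :
    |latticeA α y n m * Real.sin (2 * m * n * π * x)| ≤
      5000 * (α - 1) * Real.exp (-(201 / 100 * (π * y))) * |Real.sin (2 * π * x)| *
        (thetaTerm (1 / 9) 4 n * thetaTerm (1 / 9) 2 m) := by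
  have hy : 0 ≤ y := by
    by_contra! h; nlinarith [pi_pos]
  have hsin : |Real.sin (2 * m * n * π * x)| ≤ (m * n : ℕ) * |Real.sin (2 * π * x)| := by
    have h := abs_sin_nat_mul_le (m * n) (2 * π * x)
    push_cast at h ⊢
    convert h using 3; ring
  have hα : 0 ≤ α - 1 := sub_nonneg.2 hα0
  rw [abs_mul]
  calc |latticeA α y n m| * |Real.sin (2 * m * n * π * x)|
      ≤ (α - 1) * (n ^ 3 * m) * (21 / 10 * (1 + π * y * (n ^ 2 + m ^ 2 : ℕ)) *
          Real.exp (-(10 / 11 * (π * y * (n ^ 2 + m ^ 2 : ℕ))))) *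
          ((m * n : ℕ) * |Real.sin (2 * π * x)|) :=
        mul_le_mul (abs_latticeA_le hα0 hα1 hy n m) hsin (abs_nonneg _)
          (mul_nonneg (mul_nonneg hα (by positivity)) (by positivity))
    _ ≤ (α - 1) * (n ^ 3 * m) * (5000 * (1 / 9) ^ (n ^ 2 + m ^ 2) *
          Real.exp (-(201 / 100 * (π * y))))* ((m * n : ℕ) * |Real.sin (2 * π * x)|) := by
        gcongr _ * ?_ * _
        exact one_add_mul_mul_exp_le hc hnm
    _ = _ := by
        simp only [thetaTerm]
        push_cast
        ring

theorem latticeA_one_one_ge {α y : ℝ} (hα0 : 1 ≤ α) (hα1 : α ≤ 11 / 10) (hy : 0 ≤ y) :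
    2 * (α - 1) * Real.exp (-(201 / 100 * (π * y))) ≤ latticeA α y 1 1 := by
  have hα : 0 < α := by linarith
  have hsum : α + 1 / α ≤ 201 / 100 := by
    have : 1 / α ≤ 201 / 100 - α := by
      rw [div_le_iff₀ hα]
      nlinarith [mul_nonneg (sub_nonneg.2 hα0) (sub_nonneg.2 hα1)]
    linarith
  have hexp : Real.exp (-(201 / 100 * (π * y))) ≤ Real.exp (-π * y * (α + 1 / α)) := by
    gcongr
    nlinarith [mul_le_mul_of_nonneg_left hsum (mul_nonneg pi_pos.le hy)]
  have hsq : 2 * (α - 1) ≤ α ^ 2 - 1 := by nlinarith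
  simp only [latticeA, Nat.cast_one, one_pow, mul_one, one_mul]
  calc 2 * (α - 1) * Real.exp (-(201 / 100 * (π * y)))
      ≤ (α ^ 2 - 1) * Real.exp (-π * y * (α + 1 / α)) :=
        mul_le_mul hsq hexp (Real.exp_pos _).le (by nlinarith)
    _ = _ := by ring

theorem pi_mul_im_ge_of_one_lt_norm {x y : ℝ} (hx0 : 0 < x) (hx1 : x < 1 / 2) (hy : 0 < y)
    (habs : 1 < ‖(⟨x, y⟩ : ℂ)‖) : 27 / 10 ≤ π * y := by
  have hnorm : 1 < x ^ 2 + y ^ 2 := by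
    have h := Complex.sq_norm (⟨x, y⟩ : ℂ)
    rw [Complex.normSq_mk] at h
    nlinarith [norm_nonneg (⟨x, y⟩ : ℂ)]
  have hy' : 866 / 1000 < y := by nlinarith
  nlinarith [pi_gt_d6]

theorem PNat.five_le_sq_add_sq_of_ne {n m : ℕ+} (h : (n, m) ≠ (1, 1)) :
    5 ≤ (n : ℕ) ^ 2 + (m : ℕ) ^ 2 := by
  have hn := n.pos
  have hm := m.pos
  have : 2 ≤ (n : ℕ) ∨ 2 ≤ (m : ℕ) := by
    by_contra! h'
    exact h (Prod.ext (PNat.coe_eq_one_iff.1 (show (n : ℕ) = 1 by omega))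
      (PNat.coe_eq_one_iff.1 (show (m : ℕ) = 1 by omega)))
  rcases this with h2 | h2 <;> nlinarith

theorem double_sum_positivity (α : ℝ) (hα0 : 1 < α) (hα1 : α ≤ 1.1)
    (x y : ℝ) (hy : 0 < y) (habs : 1 < ‖(⟨x, y⟩ : ℂ)‖)
    (hx0 : 0 < x) (hx1 : x < 1 / 2) :
    0 < ∑' n : ℕ+, ∑' m : ℕ+,
          latticeA α y (n : ℕ) (m : ℕ) * Real.sin (2 * (m : ℝ) * (n : ℝ) * π * x) := by
  have hα : α ≤ 11 / 10 := hα1.trans_eq (by norm_num)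
  have hc := pi_mul_im_ge_of_one_lt_norm hx0 hx1 hy habs
  have hsin : 0 < Real.sin (2 * π * x) :=
    Real.sin_pos_of_pos_of_lt_pi (by positivity) (by nlinarith [pi_pos])
  set K := 5000 * (α - 1) * Real.exp (-(201 / 100 * (π * y))) * Real.sin (2 * π * x)
  have hK0 : 0 < K := by have := sub_pos.2 hα0; positivity
  have hdominant : ∑' p, K * latticeMajorant p <
      latticeA α y 1 1 * Real.sin (2 * (1 : ℕ) * (1 : ℕ) * π * x) +
        K * latticeMajorant (1, 1) := by
    have h11 := mul_le_mul_of_nonneg_right (latticeA_one_one_ge hα0.le hα hy.le) hsin.le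
    have := mul_lt_mul_of_pos_left tsum_latticeMajorant_lt hK0
    rw [tsum_mul_left]
    simp only [Nat.cast_one, mul_one] at h11 ⊢
    linarith
  obtain ⟨hf, hpos⟩ := tsum_pos_of_abs_le_of_ne (i := ((1 : ℕ+), (1 : ℕ+)))
    (f := fun p : ℕ+ × ℕ+ =>
      latticeA α y p.1 p.2 * Real.sin (2 * (p.2 : ℕ) * (p.1 : ℕ) * π * x))
    (summable_latticeMajorant.mul_left K)
    (fun p hp => (abs_latticeA_mul_sin_le x hα0.le hα hc
      (PNat.five_le_sq_add_sq_of_ne hp)).trans_eq (by rw [abs_of_pos hsin]; rfl))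
    hdominant
  rwa [hf.tsum_prod' fun n => hf.prod_factor n] at hpos
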